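/- arXiv:1402.6493 — 3 statements merged into one kernel-verified Lean document; each statement's English description precedes it below -/
import Mathlib

section
/- The improper integral ∫_0^∞ t·sin²((t-1)π/2)/(t²-1)² dt converges and equals -1/2 + (π/4)·Si(π), where Si(x) = ∫_0^x (sin u)/u du is the sine integral. -/
/-!
Since `1 + cos (π t) = 2 sin² ((t - 1) π / 2)`, on `t ≠ ±1` the integrand is the derivative of
`F t = -(1 + cos (π t)) / (4 (t² - 1)) - (π / 8) (Si (π (t + 1)) - Si (π (t - 1)))`:
the `Si` terms differentiate to `-π sin (π t) / (4 (t² - 1))`, which cancels the `sin (π t)` term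
coming from the first summand. `F` is continuous at `t = 1`, where `1 + cos (π t)` has a double
zero, and `F t → 0` as `t → ∞` because `|Si (x + c) - Si x| ≤ c / x`. The integrand is
nonnegative, so the fundamental theorem of calculus gives both its integrability on `(0, ∞)` and
the value `0 - F 0 = -1/2 + (π / 4) Si π`.
-/

open MeasureTheory Real

/-- The sine integral `Si(x) = ∫_0^x (sin u)/u du`. -/
noncomputable def sineIntegral (x : ℝ) : ℝ := ∫ u in (0 : ℝ)..x, Real.sin u / u

open Filter Set Topology

theorem continuousAt_div_sub_of_hasDerivAt_zero {𝕜 : Type*} [NontriviallyNormedField 𝕜]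
    {f : 𝕜 → 𝕜} {a : 𝕜} (hfa : f a = 0) (hf : HasDerivAt f 0 a) :
    ContinuousAt (fun t => f t / (t - a)) a := by
  have hdslope : (fun t => f t / (t - a)) = dslope f a := by
    ext t
    rcases eq_or_ne t a with rfl | ht
    · simp [hf.deriv]
    · rw [dslope_of_ne f ht, slope_def_field, hfa, sub_zero]
  rw [hdslope]
  exact continuousAt_dslope_same.2 hf.differentiableAt

theorem integrableOn_Ioi_deriv_and_integral_eq_of_nonneg_off {g g' : ℝ → ℝ} {a c l : ℝ}
    (hac : a < c) (hcont_a : ContinuousWithinAt g (Ici a) a) (hcont_c : ContinuousAt g c)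
    (hderiv : ∀ x ∈ Ioi a, x ≠ c → HasDerivAt g (g' x) x) (hnonneg : ∀ x ∈ Ioi a, 0 ≤ g' x)
    (hg : Tendsto g atTop (𝓝 l)) :
    IntegrableOn g' (Ioi a) ∧ ∫ x in Ioi a, g' x = l - g a := by
  have hcont : ContinuousOn g (Icc a c) := by
    intro x hx
    rcases hx.1.eq_or_lt with rfl | hax
    · exact hcont_a.mono Icc_subset_Ici_self
    rcases hx.2.eq_or_lt with rfl | hxc
    · exact hcont_c.continuousWithinAt
    · exact (hderiv x hax hxc.ne).continuousAt.continuousWithinAt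
  have hderiv_Ioo : ∀ x ∈ Ioo a c, HasDerivAt g (g' x) x := fun x hx => hderiv x hx.1 hx.2.ne
  have hderiv_Ioi : ∀ x ∈ Ioi c, HasDerivAt g (g' x) x :=
    fun x hx => hderiv x (hac.trans hx) (ne_of_gt hx)
  have hnonneg_Ioi : ∀ x ∈ Ioi c, 0 ≤ g' x := fun x hx => hnonneg x (hac.trans hx)
  have hint_Ioc : IntegrableOn g' (Ioc a c) :=
    intervalIntegral.integrableOn_deriv_of_nonneg hcont hderiv_Ioo fun x hx => hnonneg x hx.1
  have hint_Ioi : IntegrableOn g' (Ioi c) :=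
    integrableOn_Ioi_deriv_of_nonneg hcont_c.continuousWithinAt hderiv_Ioi hnonneg_Ioi hg
  have hsplit : Ioc a c ∪ Ioi c = Ioi a := Ioc_union_Ioi_eq_Ioi hac.le
  refine ⟨hsplit ▸ hint_Ioc.union hint_Ioi, ?_⟩
  have hIoc : ∫ x in Ioc a c, g' x = g c - g a := by
    rw [← intervalIntegral.integral_of_le hac.le]
    exact intervalIntegral.integral_eq_sub_of_hasDerivAt_of_le hac.le hcont hderiv_Ioo
      ((intervalIntegrable_iff_integrableOn_Ioc_of_le hac.le).2 hint_Ioc)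
  have hIoi : ∫ x in Ioi c, g' x = l - g c :=
    integral_Ioi_of_hasDerivAt_of_nonneg hcont_c.continuousWithinAt hderiv_Ioi hnonneg_Ioi hg
  rw [← hsplit, setIntegral_union (Ioc_disjoint_Ioi le_rfl) measurableSet_Ioi hint_Ioc hint_Ioi,
    hIoc, hIoi]
  ring

theorem sineIntegral_eq_integral_sinc (x : ℝ) : sineIntegral x = ∫ u in 0..x, sinc u := by
  refine intervalIntegral.integral_congr_ae ?_
  filter_upwards [compl_mem_ae_iff.2 (measure_singleton (μ := volume) (0 : ℝ))] with u hu _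
  exact (sinc_of_ne_zero hu).symm

theorem hasDerivAt_sineIntegral (x : ℝ) : HasDerivAt sineIntegral (sinc x) x := by
  rw [show sineIntegral = fun x => ∫ u in 0..x, sinc u from funext sineIntegral_eq_integral_sinc]
  exact (continuous_sinc.integral_hasStrictDerivAt 0 x).hasDerivAt

@[fun_prop]
theorem continuous_sineIntegral : Continuous sineIntegral :=
  continuous_iff_continuousAt.2 fun x => (hasDerivAt_sineIntegral x).continuousAt

theorem sineIntegral_neg (x : ℝ) : sineIntegral (-x) = -sineIntegral x := by
  simp only [sineIntegral_eq_integral_sinc]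
  calc ∫ u in 0..-x, sinc u = ∫ u in 0..-x, sinc (-u) := by simp only [sinc_neg]
    _ = ∫ u in x..0, sinc u := by rw [intervalIntegral.integral_comp_neg, neg_neg, neg_zero]
    _ = -∫ u in 0..x, sinc u := intervalIntegral.integral_symm 0 x

theorem abs_sineIntegral_sub_le {a b : ℝ} (ha : 0 < a) (hab : a ≤ b) :
    |sineIntegral b - sineIntegral a| ≤ (b - a) / a := by
  have hint : ∀ x y : ℝ, IntervalIntegrable sinc volume x y :=
    fun x y => continuous_sinc.intervalIntegrable x y
  rw [sineIntegral_eq_integral_sinc, sineIntegral_eq_integral_sinc,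
    intervalIntegral.integral_interval_sub_left (hint 0 b) (hint 0 a), ← Real.norm_eq_abs]
  have hbound : ∀ x ∈ uIoc a b, ‖sinc x‖ ≤ a⁻¹ := by
    intro x hx
    have hax : a < x := (uIoc_of_le hab ▸ hx).1
    have hx : 0 < x := ha.trans hax
    rw [sinc_of_ne_zero hx.ne', norm_div, Real.norm_of_nonneg hx.le, ← one_div]
    calc ‖sin x‖ / x ≤ 1 / x := by gcongr; exact Real.norm_eq_abs _ ▸ abs_sin_le_one x
      _ ≤ 1 / a := by gcongr
  calc ‖∫ u in a..b, sinc u‖ ≤ a⁻¹ * |b - a| :=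
        intervalIntegral.norm_integral_le_of_norm_le_const hbound
    _ = (b - a) / a := by rw [abs_of_nonneg (sub_nonneg.2 hab)]; ring

theorem tendsto_sineIntegral_add_sub_atTop {c : ℝ} (hc : 0 ≤ c) :
    Tendsto (fun t => sineIntegral (t + c) - sineIntegral t) atTop (𝓝 0) := by
  refine squeeze_zero_norm' ?_ ((tendsto_const_nhds (x := c)).div_atTop tendsto_id)
  filter_upwards [eventually_gt_atTop 0] with t ht
  simpa using abs_sineIntegral_sub_le ht (le_add_of_nonneg_right hc)

noncomputable def sinSqPrimitive (t : ℝ) : ℝ :=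
  -(1 + cos (π * t)) / (4 * (t ^ 2 - 1)) -
    π / 8 * (sineIntegral (π * (t + 1)) - sineIntegral (π * (t - 1)))

theorem sin_sq_sub_one_mul_pi_div_two (t : ℝ) :
    sin ((t - 1) * π / 2) ^ 2 = (1 + cos (π * t)) / 2 := by
  rw [show (t - 1) * π / 2 = t * π / 2 - π / 2 by ring, sin_sub_pi_div_two, neg_sq, cos_sq,
    show 2 * (t * π / 2) = π * t by ring]
  ring

theorem hasDerivAt_sinSqPrimitive {t : ℝ} (h₁ : t ≠ 1) (h₂ : t ≠ -1) :
    HasDerivAt sinSqPrimitive (t * sin ((t - 1) * π / 2) ^ 2 / (t ^ 2 - 1) ^ 2) t := by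
  have hsub : t - 1 ≠ 0 := sub_ne_zero.2 h₁
  have hadd : t + 1 ≠ 0 := by rwa [← sub_neg_eq_add, sub_ne_zero]
  have hlin : HasDerivAt (fun s => π * s) π t := by simpa using (hasDerivAt_id t).const_mul π
  have hcos := ((hlin.cos).const_add 1).neg
  have hden : HasDerivAt (fun s => 4 * (s ^ 2 - 1)) (4 * (2 * t)) t := by
    simpa using ((hasDerivAt_pow 2 t).sub_const 1).const_mul 4
  have hSi_add : HasDerivAt (fun s => sineIntegral (π * (s + 1))) (sinc (π * (t + 1)) * π) t :=
    (hasDerivAt_sineIntegral _).comp t (by simpa using ((hasDerivAt_id t).add_const 1).const_mul π)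
  have hSi_sub : HasDerivAt (fun s => sineIntegral (π * (s - 1))) (sinc (π * (t - 1)) * π) t :=
    (hasDerivAt_sineIntegral _).comp t (by simpa using ((hasDerivAt_id t).sub_const 1).const_mul π)
  have hsq : t ^ 2 - 1 ≠ 0 := by
    rw [show t ^ 2 - 1 = (t - 1) * (t + 1) by ring]
    exact mul_ne_zero hsub hadd
  refine ((hcos.div hden (mul_ne_zero four_ne_zero hsq)).sub
    ((hSi_add.sub hSi_sub).const_mul (π / 8))).congr_deriv ?_
  rw [sinc_of_ne_zero (mul_ne_zero pi_ne_zero hadd), sinc_of_ne_zero (mul_ne_zero pi_ne_zero hsub),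
    sin_sq_sub_one_mul_pi_div_two, show π * (t + 1) = π * t + π by ring,
    show π * (t - 1) = π * t - π by ring, sin_add_pi, sin_sub_pi, Pi.neg_apply]
  field_simp
  ring

theorem continuousAt_sinSqPrimitive_one : ContinuousAt sinSqPrimitive 1 := by
  have hnum : HasDerivAt (fun t => 1 + cos (π * t)) 0 1 := by
    simpa using (((hasDerivAt_id (1 : ℝ)).const_mul π).cos.const_add 1)
  have hquot := continuousAt_div_sub_of_hasDerivAt_zero (by simp) hnum
  have hfirst : ContinuousAt (fun t => -(1 + cos (π * t)) / (4 * (t ^ 2 - 1))) 1 := by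
    have hfactor : (fun t => -(1 + cos (π * t)) / (4 * (t ^ 2 - 1))) =
        fun t => -((1 + cos (π * t)) / (t - 1)) / (4 * (t + 1)) := by
      ext t
      rw [neg_div, neg_div, div_div]
      ring_nf
    rw [hfactor]
    exact hquot.neg.div (by fun_prop) (by norm_num)
  exact hfirst.sub (by fun_prop)

theorem tendsto_sinSqPrimitive_atTop : Tendsto sinSqPrimitive atTop (𝓝 0) := by
  have hfirst : Tendsto (fun t => -(1 + cos (π * t)) / (4 * (t ^ 2 - 1))) atTop (𝓝 0) := by
    have hden : Tendsto (fun t : ℝ => 4 * (t ^ 2 - 1)) atTop atTop :=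
      (tendsto_atTop_add_const_right _ (-1) (tendsto_pow_atTop two_ne_zero)).const_mul_atTop
        four_pos
    simp_rw [div_eq_mul_inv]
    refine bdd_le_mul_tendsto_zero' 2 (Eventually.of_forall fun t => ?_) hden.inv_tendsto_atTop
    rw [abs_neg, abs_le]
    constructor <;> linarith [neg_one_le_cos (π * t), cos_le_one (π * t)]
  have hsecond : Tendsto
      (fun t => π / 8 * (sineIntegral (π * (t + 1)) - sineIntegral (π * (t - 1)))) atTop (𝓝 0) := by
    have hshift : Tendsto (fun t : ℝ => π * (t - 1)) atTop atTop :=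
      (tendsto_atTop_add_const_right _ (-1) tendsto_id).const_mul_atTop pi_pos
    have h := ((tendsto_sineIntegral_add_sub_atTop (c := 2 * π) (by positivity)).comp
      hshift).const_mul (π / 8)
    rw [mul_zero] at h
    refine h.congr fun t => ?_
    rw [Function.comp_apply, show π * (t - 1) + 2 * π = π * (t + 1) by ring]
  rw [← sub_zero (0 : ℝ)]
  exact hfirst.sub hsecond

theorem sinSqPrimitive_zero : sinSqPrimitive 0 = 1 / 2 - π / 4 * sineIntegral π := by
  rw [sinSqPrimitive, mul_zero, cos_zero, zero_add, mul_one, zero_sub, mul_neg, mul_one,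
    sineIntegral_neg]
  ring

/-- The improper integral `∫_0^∞ t·sin²((t-1)π/2)/(t²-1)² dt` converges and equals
`-1/2 + (π/4)·Si(π)`. -/
theorem stmt_1 :
    IntegrableOn
      (fun t : ℝ => t * Real.sin ((t - 1) * Real.pi / 2) ^ 2 / (t ^ 2 - 1) ^ 2)
      (Set.Ioi 0) ∧
    (∫ t in Set.Ioi (0 : ℝ),
        t * Real.sin ((t - 1) * Real.pi / 2) ^ 2 / (t ^ 2 - 1) ^ 2) =
      -1/2 + (Real.pi / 4) * sineIntegral Real.pi := by
  have hderiv : ∀ t ∈ Ioi (0 : ℝ), t ≠ 1 →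
      HasDerivAt sinSqPrimitive (t * sin ((t - 1) * π / 2) ^ 2 / (t ^ 2 - 1) ^ 2) t :=
    fun t ht h₁ => hasDerivAt_sinSqPrimitive h₁ (by linarith [ht.out])
  have h := integrableOn_Ioi_deriv_and_integral_eq_of_nonneg_off zero_lt_one
    (hasDerivAt_sinSqPrimitive zero_ne_one (by norm_num)).continuousAt.continuousWithinAt
    continuousAt_sinSqPrimitive_one hderiv (fun t ht => by have := ht.out; positivity)
    tendsto_sinSqPrimitive_atTop
  rw [sinSqPrimitive_zero] at h
  exact ⟨h.1, by rw [h.2]; ring⟩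
end

section
/- The improper integral ∫_0^∞ sin²((t-1)π/2)/(t²-1)² dt converges and equals π²/8. -/
open MeasureTheory Real Set Filter Topology

/-!
Partial fractions and `sin²(π(t+1)/2) = sin²(π(t-1)/2)` give
`sin²((t-1)π/2)/(t²-1)² = (g(t-1) + g(t+1) + h(t+1) - h(t-1))/4`
with `g(u) = sin²(πu/2)/u²` and `h(u) = sin²(πu/2)/u`. Over `[0, R]` the `h`-terms telescope,
`h` being odd, to `∫_{R-1}^{R+1} h = O(1/R)`, while by evenness the `g`-terms tend to
`∫_{-1}^∞ g + ∫_1^∞ g = ∫_ℝ g = π²/2`. Finally `∫_0^∞ sin²(au)/u² du = πa/2` follows by writing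
`1/u² = ∫_0^∞ t e^{-tu} dt` and swapping the integrals, since the Laplace transform of
`sin²(au)` is `2a²/(t(t²+4a²))`.
-/

theorem integral_exp_neg_mul_mul_cos {t : ℝ} (ht : 0 < t) (b : ℝ) :
    ∫ u in Ioi (0 : ℝ), exp (-(t * u)) * cos (b * u) = t / (t ^ 2 + b ^ 2) := by
  have hlt : (-t + b * Complex.I).re < 0 := by simpa using ht
  have hre : ∀ u : ℝ, exp (-(t * u)) * cos (b * u)
      = RCLike.re (Complex.exp ((-t + b * Complex.I) * u)) := by
    intro u
    rw [RCLike.re_to_complex, Complex.exp_re]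
    simp
  simp_rw [hre]
  rw [integral_re (integrableOn_exp_mul_complex_Ioi hlt 0), integral_exp_mul_complex_Ioi hlt 0]
  simp [Complex.div_re, Complex.normSq_apply, sq]

theorem integral_exp_neg_mul_mul_sin_sq {t : ℝ} (ht : 0 < t) (a : ℝ) :
    ∫ u in Ioi (0 : ℝ), exp (-(t * u)) * sin (a * u) ^ 2
      = 2 * a ^ 2 / (t * (t ^ 2 + 4 * a ^ 2)) := by
  have hexp : IntegrableOn (fun u : ℝ => exp (-(t * u))) (Ioi 0) := by
    simpa using exp_neg_integrableOn_Ioi 0 ht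
  have hcos : IntegrableOn (fun u : ℝ => exp (-(t * u)) * cos (2 * a * u)) (Ioi 0) :=
    hexp.mul_bdd (by fun_prop) (.of_forall fun u => by simpa using abs_cos_le_one _)
  have hexp_val : ∫ u in Ioi (0 : ℝ), exp (-(t * u)) = 1 / t := by
    simpa [neg_mul] using integral_exp_mul_Ioi (neg_neg_of_pos ht) 0
  have hsin_sq : ∀ u, exp (-(t * u)) * sin (a * u) ^ 2
      = (exp (-(t * u)) - exp (-(t * u)) * cos (2 * a * u)) / 2 := by
    intro u
    rw [sin_sq_eq_half_sub]
    ring_nf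
  simp_rw [hsin_sq]
  rw [integral_div, integral_sub hexp hcos, integral_exp_neg_mul_mul_cos ht, hexp_val]
  field_simp
  ring

theorem integral_mul_exp_neg_mul {u : ℝ} (hu : 0 < u) :
    ∫ t in Ioi (0 : ℝ), t * exp (-(t * u)) = 1 / u ^ 2 := by
  simpa [mul_comm _ u, show (2 : ℝ) - 1 = 1 by norm_num] using
    integral_rpow_mul_exp_neg_mul_Ioi (a := 2) two_pos hu

theorem Function.Odd.intervalIntegral_eq_zero {h : ℝ → ℝ} (hh : Function.Odd h) (c : ℝ) :
    ∫ x in -c..c, h x = 0 := by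
  have := intervalIntegral.integral_comp_neg (a := -c) (b := c) h
  simp only [hh _, intervalIntegral.integral_neg, neg_neg] at this
  linarith

theorem Function.Odd.intervalIntegral_comp_add_sub_comp_sub {h : ℝ → ℝ} (hh : Function.Odd h)
    (hint : ∀ a b, IntervalIntegrable h volume a b) (c R : ℝ) :
    ∫ t in 0..R, (h (t + c) - h (t - c)) = ∫ u in (R - c)..(R + c), h u := by
  have h_add : IntervalIntegrable (fun t => h (t + c)) volume 0 R := by
    simpa using (hint c (R + c)).comp_add_right c
  have h_sub : IntervalIntegrable (fun t => h (t - c)) volume 0 R := by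
    simpa using (hint (-c) (R - c)).comp_sub_right c
  rw [intervalIntegral.integral_sub h_add h_sub, intervalIntegral.integral_comp_add_right,
    intervalIntegral.integral_comp_sub_right,
    intervalIntegral.integral_interval_sub_interval_comm' (hint _ _) (hint _ _) (hint _ _)]
  simp [hh.intervalIntegral_eq_zero]

theorem Function.Even.integral_Ioi_neg_add_integral_Ioi {g : ℝ → ℝ} (hg : Function.Even g)
    (hint : Integrable g) (c : ℝ) :
    (∫ x in Ioi (-c), g x) + ∫ x in Ioi c, g x = ∫ x, g x := by
  have : ∫ x in Ioi c, g x = ∫ x in Iic (-c), g x := by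
    simp only [← integral_comp_neg_Ioi, hg _]
  rw [this, add_comm, intervalIntegral.integral_Iic_add_Ioi hint.integrableOn hint.integrableOn]

noncomputable def sinSqDivSq (a u : ℝ) : ℝ := sin (a * u) ^ 2 / u ^ 2

noncomputable def sinSqDiv (a u : ℝ) : ℝ := sin (a * u) ^ 2 / u

section sinSqDivSq

variable (a : ℝ)

theorem sinSqDivSq_even : Function.Even (sinSqDivSq a) := fun u => by
  simp [sinSqDivSq]

theorem sinSqDivSq_le (u : ℝ) : sinSqDivSq a u ≤ (a ^ 2 + 1) * (1 + u ^ 2)⁻¹ := by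
  rcases eq_or_ne u 0 with rfl | hu
  · simp [sinSqDivSq]
    positivity
  rw [sinSqDivSq, ← div_eq_mul_inv, div_le_div_iff₀ (by positivity) (by positivity)]
  nlinarith [sin_sq_le_sq (x := a * u), sin_sq_le_one (a * u), sq_nonneg u]

theorem integrable_sinSqDivSq : Integrable (sinSqDivSq a) :=
  (integrable_inv_one_add_sq.const_mul _).mono'
    (by unfold sinSqDivSq; fun_prop : Measurable _).aestronglyMeasurable <|
    .of_forall fun u => by
      rw [norm_of_nonneg (by unfold sinSqDivSq; positivity)]
      exact sinSqDivSq_le a u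

variable {a}

theorem integral_Ioi_sinSqDivSq (ha : 0 < a) :
    ∫ u in Ioi (0 : ℝ), sinSqDivSq a u = π * a / 2 := by
  set F : ℝ → ℝ → ℝ := fun u t => t * (exp (-(t * u)) * sin (a * u) ^ 2)
  have hF_inner : ∀ u ∈ Ioi (0 : ℝ), ∫ t in Ioi (0 : ℝ), F u t = sinSqDivSq a u := by
    intro u hu
    simp only [F, ← mul_assoc]
    rw [integral_mul_const, integral_mul_exp_neg_mul hu, one_div_mul_eq_div, sinSqDivSq]
  have hF_int : Integrable (Function.uncurry F)
      ((volume.restrict (Ioi 0)).prod (volume.restrict (Ioi 0))) := by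
    rw [integrable_prod_iff (by fun_prop)]
    constructor
    · refine (ae_restrict_iff' measurableSet_Ioi).2 (.of_forall fun u (hu : 0 < u) => ?_)
      -- a non-integrable function would have integral `0`
      have : Integrable (fun t => t * exp (-(t * u))) (volume.restrict (Ioi 0)) :=
        .of_integral_ne_zero (by rw [integral_mul_exp_neg_mul hu]; positivity)
      simpa only [F, Function.uncurry_apply_pair, ← mul_assoc] using
        this.mul_const (sin (a * u) ^ 2)
    · refine (integrable_sinSqDivSq a).integrableOn.congr_fun (fun u hu => ?_) measurableSet_Ioi
      simp only [Function.uncurry_apply_pair]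
      rw [← hF_inner u hu]
      refine setIntegral_congr_fun measurableSet_Ioi fun t (ht : 0 < t) => ?_
      exact (norm_of_nonneg (by positivity)).symm
  calc ∫ u in Ioi (0 : ℝ), sinSqDivSq a u
      = ∫ u in Ioi (0 : ℝ), ∫ t in Ioi (0 : ℝ), F u t :=
        (setIntegral_congr_fun measurableSet_Ioi hF_inner).symm
    _ = ∫ t in Ioi (0 : ℝ), ∫ u in Ioi (0 : ℝ), F u t := integral_integral_swap hF_int
    _ = ∫ t in Ioi (0 : ℝ), 2⁻¹ * (1 + ((2 * a)⁻¹ * t) ^ 2)⁻¹ := by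
      refine setIntegral_congr_fun measurableSet_Ioi fun t (ht : 0 < t) => ?_
      rw [integral_const_mul, integral_exp_neg_mul_mul_sin_sq ht]
      field_simp
      ring
    _ = π * a / 2 := by
      rw [integral_const_mul,
        integral_comp_mul_left_Ioi (fun x => (1 + x ^ 2)⁻¹) 0 (by positivity)]
      simp
      field_simp

theorem integral_sinSqDivSq (ha : 0 < a) : ∫ u, sinSqDivSq a u = π * a := by
  have habs : ∀ u, sinSqDivSq a |u| = sinSqDivSq a u := fun u => by
    rcases abs_choice u with h | h <;> rw [h]
    exact sinSqDivSq_even a u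
  have := integral_comp_abs (f := sinSqDivSq a)
  simp only [habs] at this
  rw [this, integral_Ioi_sinSqDivSq ha]
  ring

end sinSqDivSq

section sinSqDiv

variable (a : ℝ)

theorem sinSqDiv_odd : Function.Odd (sinSqDiv a) := fun u => by
  simp [sinSqDiv, div_neg]

theorem abs_sinSqDiv_le (u : ℝ) : |sinSqDiv a u| ≤ |a| := by
  rcases eq_or_ne u 0 with rfl | hu
  · simp [sinSqDiv]
  rw [sinSqDiv, abs_div, div_le_iff₀ (abs_pos.2 hu), ← abs_mul, abs_of_nonneg (sq_nonneg _),
    ← sq_abs]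
  calc |sin (a * u)| ^ 2 ≤ |sin (a * u)| :=
        pow_le_of_le_one (abs_nonneg _) (abs_sin_le_one _) two_ne_zero
    _ ≤ |a * u| := abs_sin_le_abs

theorem abs_sinSqDiv_le_inv {u : ℝ} (hu : 0 < u) : |sinSqDiv a u| ≤ u⁻¹ := by
  rw [sinSqDiv, abs_of_nonneg (by positivity), div_eq_mul_inv]
  exact mul_le_of_le_one_left (by positivity) (sin_sq_le_one _)

theorem intervalIntegrable_sinSqDiv (b c : ℝ) : IntervalIntegrable (sinSqDiv a) volume b c :=
  intervalIntegrable_const.mono_fun'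
    (by unfold sinSqDiv; fun_prop : Measurable _).aestronglyMeasurable
    (.of_forall (abs_sinSqDiv_le a))

theorem tendsto_integral_sinSqDiv_atTop :
    Tendsto (fun R => ∫ u in (R - 1)..(R + 1), sinSqDiv a u) atTop (𝓝 0) := by
  have hR : Tendsto (fun R : ℝ => R - 1) atTop atTop :=
    tendsto_atTop_add_const_right _ _ tendsto_id
  have : Tendsto (fun R : ℝ => (R - 1)⁻¹ * |(R + 1) - (R - 1)|) atTop (𝓝 0) := by
    simpa [one_add_one_eq_two] using hR.inv_tendsto_atTop.mul_const 2
  refine squeeze_zero_norm' ?_ this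
  filter_upwards [eventually_gt_atTop 1] with R hR
  refine intervalIntegral.norm_integral_le_of_norm_le_const fun u hu => ?_
  rw [uIoc_of_le (by linarith)] at hu
  have hRu : 0 < R - 1 := by linarith
  exact (abs_sinSqDiv_le_inv a (hRu.trans hu.1)).trans (inv_anti₀ hRu hu.1.le)

end sinSqDiv

theorem sin_sq_div_sq_sub_one_sq_eq (t : ℝ) :
    sin ((t - 1) * π / 2) ^ 2 / (t ^ 2 - 1) ^ 2
      = (sinSqDivSq (π / 2) (t - 1) + sinSqDivSq (π / 2) (t + 1)
          + (sinSqDiv (π / 2) (t + 1) - sinSqDiv (π / 2) (t - 1))) / 4 := by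
  have hshift : sin (π / 2 * (t + 1)) ^ 2 = sin ((t - 1) * π / 2) ^ 2 := by
    rw [show π / 2 * (t + 1) = (t - 1) * π / 2 + π by ring, sin_add_pi, neg_sq]
  rw [sinSqDivSq, sinSqDivSq, sinSqDiv, sinSqDiv, hshift,
    show π / 2 * (t - 1) = (t - 1) * π / 2 by ring]
  -- at `t = ±1` both sides vanish, by the convention `x / 0 = 0`
  rcases eq_or_ne t 1 with rfl | h1
  · simp
  rcases eq_or_ne t (-1) with rfl | h2
  · rw [show (-1 - 1) * π / 2 = -π by ring, sin_neg, sin_pi]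
    simp
  have : t - 1 ≠ 0 := sub_ne_zero.2 h1
  have : t + 1 ≠ 0 := fun h => h2 (by linarith)
  generalize sin ((t - 1) * π / 2) ^ 2 = s
  rw [show t ^ 2 - 1 = (t - 1) * (t + 1) by ring]
  field_simp
  ring

theorem sin_sq_div_sq_sub_one_sq_le {t : ℝ} (ht : 0 ≤ t) :
    sin ((t - 1) * π / 2) ^ 2 / (t ^ 2 - 1) ^ 2 ≤ (π / 2) ^ 2 * (1 + t ^ 2)⁻¹ := by
  rcases eq_or_ne t 1 with rfl | h1
  · simp
    positivity
  have : t ^ 2 - 1 ≠ 0 := by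
    rw [show t ^ 2 - 1 = (t - 1) * (t + 1) by ring]
    exact mul_ne_zero (sub_ne_zero.2 h1) (by positivity)
  rw [← div_eq_mul_inv, div_le_div_iff₀ (by positivity) (by positivity)]
  have hsin : sin ((t - 1) * π / 2) ^ 2 ≤ (π / 2) ^ 2 * (t - 1) ^ 2 := by
    nlinarith [sin_sq_le_sq (x := (t - 1) * π / 2)]
  have hden : (t - 1) ^ 2 * (1 + t ^ 2) ≤ (t ^ 2 - 1) ^ 2 := by
    nlinarith [mul_nonneg (sq_nonneg (t - 1)) ht]
  calc sin ((t - 1) * π / 2) ^ 2 * (1 + t ^ 2)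
      ≤ (π / 2) ^ 2 * (t - 1) ^ 2 * (1 + t ^ 2) := by gcongr
    _ ≤ (π / 2) ^ 2 * (t ^ 2 - 1) ^ 2 := by rw [mul_assoc]; gcongr

theorem integrableOn_sin_sq_div_sq_sub_one_sq :
    IntegrableOn (fun t : ℝ => sin ((t - 1) * π / 2) ^ 2 / (t ^ 2 - 1) ^ 2) (Ioi 0) := by
  refine (integrable_inv_one_add_sq.const_mul ((π / 2) ^ 2)).integrableOn.mono'
    (by fun_prop : Measurable _).aestronglyMeasurable ?_
  refine (ae_restrict_iff' measurableSet_Ioi).2 (.of_forall fun t (ht : 0 < t) => ?_)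
  rw [norm_of_nonneg (by positivity)]
  exact sin_sq_div_sq_sub_one_sq_le ht.le

theorem intervalIntegral_sin_sq_div_sq_sub_one_sq (R : ℝ) :
    ∫ t in 0..R, sin ((t - 1) * π / 2) ^ 2 / (t ^ 2 - 1) ^ 2
      = ((∫ u in -1..(R - 1), sinSqDivSq (π / 2) u)
          + (∫ u in 1..(R + 1), sinSqDivSq (π / 2) u)
          + ∫ u in (R - 1)..(R + 1), sinSqDiv (π / 2) u) / 4 := by
  have hG_add : IntervalIntegrable (fun t => sinSqDivSq (π / 2) (t + 1)) volume 0 R :=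
    ((integrable_sinSqDivSq _).comp_add_right 1).intervalIntegrable
  have hG_sub : IntervalIntegrable (fun t => sinSqDivSq (π / 2) (t - 1)) volume 0 R :=
    ((integrable_sinSqDivSq _).comp_sub_right 1).intervalIntegrable
  have hH_add : IntervalIntegrable (fun t => sinSqDiv (π / 2) (t + 1)) volume 0 R := by
    simpa using (intervalIntegrable_sinSqDiv _ 1 (R + 1)).comp_add_right 1
  have hH_sub : IntervalIntegrable (fun t => sinSqDiv (π / 2) (t - 1)) volume 0 R := by
    simpa using (intervalIntegrable_sinSqDiv _ (-1) (R - 1)).comp_sub_right 1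
  simp_rw [sin_sq_div_sq_sub_one_sq_eq, intervalIntegral.integral_div]
  rw [intervalIntegral.integral_add (hG_sub.add hG_add) (hH_add.sub hH_sub),
    intervalIntegral.integral_add hG_sub hG_add,
    (sinSqDiv_odd _).intervalIntegral_comp_add_sub_comp_sub (intervalIntegrable_sinSqDiv _),
    intervalIntegral.integral_comp_sub_right, intervalIntegral.integral_comp_add_right,
    zero_sub, zero_add]

theorem tendsto_intervalIntegral_sin_sq_div_sq_sub_one_sq :
    Tendsto (fun R => ∫ t in 0..R, sin ((t - 1) * π / 2) ^ 2 / (t ^ 2 - 1) ^ 2) atTop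
      (𝓝 (π ^ 2 / 8)) := by
  have hG := integrable_sinSqDivSq (π / 2)
  have h_left : Tendsto (fun R => ∫ u in -1..(R - 1), sinSqDivSq (π / 2) u) atTop
      (𝓝 (∫ u in Ioi (-1), sinSqDivSq (π / 2) u)) :=
    intervalIntegral_tendsto_integral_Ioi _ hG.integrableOn
      (tendsto_atTop_add_const_right _ _ tendsto_id)
  have h_right : Tendsto (fun R => ∫ u in 1..(R + 1), sinSqDivSq (π / 2) u) atTop
      (𝓝 (∫ u in Ioi 1, sinSqDivSq (π / 2) u)) :=
    intervalIntegral_tendsto_integral_Ioi _ hG.integrableOn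
      (tendsto_atTop_add_const_right _ _ tendsto_id)
  have h_sum :
      (∫ u in Ioi (-1), sinSqDivSq (π / 2) u) + (∫ u in Ioi 1, sinSqDivSq (π / 2) u) + 0
        = π ^ 2 / 2 := by
    rw [(sinSqDivSq_even _).integral_Ioi_neg_add_integral_Ioi hG,
      integral_sinSqDivSq (by positivity)]
    ring
  simp_rw [intervalIntegral_sin_sq_div_sq_sub_one_sq]
  rw [show π ^ 2 / 8 = π ^ 2 / 2 / 4 by ring, ← h_sum]
  exact ((h_left.add h_right).add (tendsto_integral_sinSqDiv_atTop _)).div_const 4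

/-- The improper integral `∫_0^∞ sin²((t-1)π/2)/(t²-1)² dt` converges and equals `π²/8`. -/
theorem stmt_2 :
    IntegrableOn
      (fun t : ℝ => Real.sin ((t - 1) * Real.pi / 2) ^ 2 / (t ^ 2 - 1) ^ 2)
      (Set.Ioi 0) ∧
    (∫ t in Set.Ioi (0 : ℝ),
        Real.sin ((t - 1) * Real.pi / 2) ^ 2 / (t ^ 2 - 1) ^ 2) =
      Real.pi ^ 2 / 8 :=
  ⟨integrableOn_sin_sq_div_sq_sub_one_sq,
    tendsto_nhds_unique
      (intervalIntegral_tendsto_integral_Ioi 0 integrableOn_sin_sq_div_sq_sub_one_sq tendsto_id)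
      tendsto_intervalIntegral_sin_sq_div_sq_sub_one_sq⟩
end

section
/- With γ and δ as above, one has γ(r) ≥ 0 for all r, and if additionally μ'(r) = 0 for r ≤ C₀|k| with C₀ ≥ δ₀^{-1/2}, Im ρ ≤ 0, and 0 < δ₀ < Re(ρ)·cos(2μ₀), then δ(r) ≥ δ₀·r·sin(2μ(r)) + r·Im(ρ)·cos(2μ(r)) for all r ≥ R. -/
/-- With `γ(r) = μ'(r)/(r⁻² + μ'(r)²)` and
`δ(r) = r·Re ρ·sin 2μ + r·Im ρ·cos 2μ + r²μ'(Re ρ·cos 2μ - Im ρ·sin 2μ) - k²μ'`,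
one has `γ ≥ 0`, and if `μ' = 0` on `r ≤ C₀|k|`, `C₀ ≥ δ₀^{-1/2}`, `Im ρ ≤ 0`,
`0 < δ₀ < Re ρ·cos 2μ₀`, then `δ(r) ≥ δ₀·r·sin 2μ(r) + r·Im ρ·cos 2μ(r)` for `r ≥ R`. -/
theorem stmt_8 (r₀ μ₀ R : ℝ) (hr₀ : 0 < r₀) (hR : r₀ ≤ R)
    (μ : ℝ → ℝ) (hμ : ContDiff ℝ (⊤ : ℕ∞) μ) (hμmono : Monotone μ)
    (hμrange : ∀ r, μ r ∈ Set.Icc 0 μ₀) (hμ₀pos : 0 < μ₀) (hμ₀small : μ₀ < Real.pi / 4)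
    (k : ℤ) (ρ : ℂ) (C₀ δ₀ : ℝ)
    (hC₀ : C₀ ≥ δ₀ ^ (-(1:ℝ)/2)) (hIm : ρ.im ≤ 0)
    (hδ₀ : 0 < δ₀) (hδ₀' : δ₀ < ρ.re * Real.cos (2 * μ₀))
    (hμ' : ∀ r ≤ C₀ * |(k : ℝ)|, deriv μ r = 0) :
    (∀ r : ℝ, 0 ≤ deriv μ r / (r⁻¹ ^ 2 + deriv μ r ^ 2)) ∧
    ∀ r ≥ R,
      r * ρ.re * Real.sin (2 * μ r) + r * ρ.im * Real.cos (2 * μ r) +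
          r ^ 2 * deriv μ r * (ρ.re * Real.cos (2 * μ r) - ρ.im * Real.sin (2 * μ r)) -
          (k : ℝ) ^ 2 * deriv μ r ≥
        δ₀ * r * Real.sin (2 * μ r) + r * ρ.im * Real.cos (2 * μ r) := by
  have hderiv : ∀ r, 0 ≤ deriv μ r := by
    intro r
    have hder : HasDerivAt μ (deriv μ r) r :=
      ((hμ.differentiable (by simp)) r).hasDerivAt
    have ht : Filter.Tendsto (slope μ r) (nhdsWithin r (Set.Ioi r)) (nhds (deriv μ r)) :=
      (hasDerivAt_iff_tendsto_slope.mp hder).mono_left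
        (nhdsWithin_mono _ (fun x hx => ne_of_gt (Set.mem_Ioi.mp hx)))
    refine ge_of_tendsto ht (eventually_nhdsWithin_of_forall fun x hx => ?_)
    have hx' : r < x := hx
    rw [slope_def_field]
    exact div_nonneg (sub_nonneg.mpr (hμmono hx'.le)) (sub_nonneg.mpr hx'.le)
  have hpi := Real.pi_pos
  have hcospos : 0 < Real.cos (2 * μ₀) :=
    Real.cos_pos_of_mem_Ioo ⟨by linarith, by linarith⟩
  have hRe : 0 < ρ.re := by nlinarith
  have hc₀pos : 0 < δ₀ ^ (-(1:ℝ)/2) := Real.rpow_pos_of_pos hδ₀ _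
  have hC₀pos : 0 < C₀ := lt_of_lt_of_le hc₀pos hC₀
  have hc₀sq : (δ₀ ^ (-(1:ℝ)/2)) ^ 2 * δ₀ = 1 := by
    rw [← Real.rpow_natCast (δ₀ ^ (-(1:ℝ)/2)) 2, ← Real.rpow_mul hδ₀.le]
    norm_num
    rw [Real.rpow_neg_one]
    exact inv_mul_cancel₀ hδ₀.ne'
  have hC₀sq : 1 ≤ C₀ ^ 2 * δ₀ := by
    have hle : (δ₀ ^ (-(1:ℝ)/2)) ^ 2 ≤ C₀ ^ 2 := pow_le_pow_left₀ hc₀pos.le hC₀ 2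
    nlinarith
  refine ⟨fun r => div_nonneg (hderiv r) (by positivity), fun r hr => ?_⟩
  have hrpos : 0 < r := lt_of_lt_of_le hr₀ (le_trans hR hr)
  obtain ⟨hμr0, hμrμ₀⟩ := hμrange r
  set s := Real.sin (2 * μ r) with hs
  set c := Real.cos (2 * μ r) with hc
  set d := deriv μ r with hd
  have hdnn : 0 ≤ d := hderiv r
  have hsnn : 0 ≤ s := Real.sin_nonneg_of_nonneg_of_le_pi (by linarith) (by linarith)
  have hcc : Real.cos (2 * μ₀) ≤ c :=
    Real.cos_le_cos_of_nonneg_of_le_pi (by linarith) (by linarith) (by linarith)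
  have hReδ : δ₀ ≤ ρ.re := by nlinarith [Real.cos_le_one (2 * μ₀)]
  have h1 : δ₀ * r * s ≤ r * ρ.re * s := by
    nlinarith [mul_nonneg (mul_nonneg (sub_nonneg.mpr hReδ) hrpos.le) hsnn]
  have h2 : (k : ℝ) ^ 2 * d ≤ r ^ 2 * d * (ρ.re * c - ρ.im * s) := by
    rcases eq_or_lt_of_le hdnn with h | h
    · rw [← h]; simp
    · have hrk : C₀ * |(k : ℝ)| < r := by
        by_contra hcon
        push_neg at hcon
        exact absurd (hμ' r hcon) (by rw [← hd]; exact h.ne')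
      have hkn : 0 ≤ |(k : ℝ)| := abs_nonneg _
      have hsq : C₀ ^ 2 * (k : ℝ) ^ 2 ≤ r ^ 2 := by
        have h' : (C₀ * |(k : ℝ)|) ^ 2 ≤ r ^ 2 := by
          apply pow_le_pow_left₀ (mul_nonneg hC₀pos.le hkn) hrk.le
        have h'' : |(k : ℝ)| ^ 2 = (k : ℝ) ^ 2 := sq_abs _
        nlinarith
      have hr2 : (k : ℝ) ^ 2 ≤ δ₀ * r ^ 2 := by
        have ha := mul_le_mul_of_nonneg_left hsq hδ₀.le
        have hb := mul_le_mul_of_nonneg_right hC₀sq (sq_nonneg (k : ℝ))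
        linarith
      have hterm : δ₀ ≤ ρ.re * c - ρ.im * s := by
        have hm0 := mul_le_mul_of_nonneg_left hcc hRe.le
        have hm1 := mul_nonneg (neg_nonneg.mpr hIm) hsnn
        linarith
      have key : (k : ℝ) ^ 2 ≤ r ^ 2 * (ρ.re * c - ρ.im * s) := by
        have hm := mul_le_mul_of_nonneg_left hterm (sq_nonneg r)
        linarith
      have hfin := mul_le_mul_of_nonneg_right key h.le
      linarith
  linarith [h1, h2]
end
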